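/- arXiv:1703.08312 — 2 statements merged into one kernel-verified Lean document; each statement's English description precedes it below -/
import Mathlib

section
/- Let p be an odd prime, q a power of p, and let g be an integer with g ≥ max{(q−1)/2, 2}, gcd(2g+2, q−1) = 2 and ⌊(2g+2)/(q−1)⌋ ≥ 2. Then for every nonzero element a of the prime subfield F_p ⊆ F_q there exists l ∈ {1, 2} such that the polynomial f(X) = X^{2g+2} − X^{2g+2−l(q−1)} + a² ∈ F_q[X] is squarefree; moreover f(x) = a², a nonzero square, for every x ∈ F_q (so y² = f(x) is a smooth F_q-maximal hyperelliptic curve of genus g defined over F_p). -/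
open Polynomial

/-- Evaluation lemma: the polynomial is constantly `a^2` on `F_q`. -/
lemma aux_eval {K : Type*} [Field K] [Fintype K] (q : ℕ) (hq : Fintype.card K = q)
    (a : K) (N m l : ℕ) (hm : 1 ≤ m) (hNm : N = m + l * (q - 1)) :
    ∀ x : K, ((X : Polynomial K) ^ N - X ^ m + C (a ^ 2)).eval x = a ^ 2 := by
  intro x
  simp only [eval_add, eval_sub, eval_pow, eval_X, eval_C]
  rcases eq_or_ne x 0 with rfl | hx
  · rw [zero_pow (by omega), zero_pow (by omega)]; ring
  · have h1 : x ^ (q - 1) = 1 := by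
      rw [← hq]; exact FiniteField.pow_card_sub_one_eq_one x hx
    rw [hNm, pow_add, mul_comm l (q-1), pow_mul, h1, one_pow, mul_one]
    ring

/-- Key lemma: a non-separable member of the family forces `(m : K) = -(N : K)`. -/
lemma aux_key {K : Type*} [Field K] [Fintype K] (q : ℕ) (hq : Fintype.card K = q)
    (a : K) (ha : a ≠ 0) (N m l : ℕ) (hm : 1 ≤ m)
    (hNm : N = m + l * (q - 1))
    (hw : ((l * (q - 1) : ℕ) : K) ≠ 0)
    (hgcd : Nat.gcd (l * (q - 1)) m ∣ 2 * l)
    (hns : ¬ ((X : Polynomial K) ^ N - X ^ m + C (a ^ 2)).Separable) :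
    (m : K) = -(N : K) ∧ (N : K) ≠ 0 := by
  set w := l * (q - 1) with hw_def
  set F := AlgebraicClosure K
  set ι := algebraMap K F with hι_def
  have hι : Function.Injective ι := (algebraMap K F).injective
  rw [Polynomial.separable_def] at hns
  have hns' : ¬ ∀ z : F, aeval z ((X : Polynomial K) ^ N - X ^ m + C (a ^ 2)) ≠ 0 ∨
      aeval z (derivative ((X : Polynomial K) ^ N - X ^ m + C (a ^ 2))) ≠ 0 := fun h =>
    hns ((Polynomial.isCoprime_iff_aeval_ne_zero_of_isAlgClosed K F
      ((X : Polynomial K) ^ N - X ^ m + C (a ^ 2))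
      (derivative ((X : Polynomial K) ^ N - X ^ m + C (a ^ 2)))).mpr h)
  push_neg at hns'
  obtain ⟨z, hz1, hz2⟩ := hns'
  have hz1' : z ^ N - z ^ m + ι (a ^ 2) = 0 := by
    simpa using hz1
  have hder : derivative ((X : Polynomial K) ^ N - X ^ m + C (a ^ 2))
      = C (N : K) * X ^ (N - 1) - C (m : K) * X ^ (m - 1) := by
    rw [derivative_add, derivative_sub, derivative_C, derivative_X_pow, derivative_X_pow,
      add_zero]
  have hz2' : ι (N : K) * z ^ (N - 1) - ι (m : K) * z ^ (m - 1) = 0 := by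
    rw [hder] at hz2
    simpa using hz2
  -- the root is nonzero
  have hz0 : z ≠ 0 := by
    rintro rfl
    rw [zero_pow (by omega), zero_pow (by omega)] at hz1'
    simp only [sub_zero, zero_add] at hz1'
    exact ha (pow_eq_zero_iff (n := 2) (by norm_num) |>.mp (hι (by simpa using hz1')))
  have hNK : (N : K) = (m : K) + (w : K) := by exact_mod_cast congrArg (Nat.cast : ℕ → K) hNm
  have hwpos : w ≠ 0 := by rintro h; apply hw; rw [h]; simp
  have hlpos : l ≠ 0 := by rintro rfl; exact hwpos (by simp [hw_def])
  -- N is nonzero in K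
  have hN0 : (N : K) ≠ 0 := by
    intro h0
    have h1 : ι (m : K) * z ^ (m - 1) = 0 := by
      have h2 := hz2'
      rw [h0, map_zero, zero_mul, zero_sub, neg_eq_zero] at h2
      exact h2
    rcases mul_eq_zero.mp h1 with h2 | h2
    · have hm0 : (m : K) = 0 := hι (by simpa using h2)
      rw [h0, hm0, zero_add] at hNK
      exact hw hNK.symm
    · exact pow_ne_zero _ hz0 h2
  have hNF : ι (N : K) ≠ 0 := fun h => hN0 (hι (by simpa using h))
  set c := (m : K) / (N : K) with hc_def
  -- z ^ w = ι c
  have hzw : z ^ w = ι c := by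
    have hexp : N - 1 = (m - 1) + w := by omega
    have h1 : ι (N : K) * (z ^ (m - 1) * z ^ w) = ι (m : K) * z ^ (m - 1) := by
      rw [← pow_add, ← hexp]
      have := sub_eq_zero.mp hz2'
      exact this
    have hzm1 : z ^ (m - 1) ≠ 0 := pow_ne_zero _ hz0
    have h2 : ι (N : K) * z ^ w = ι (m : K) := by
      apply mul_right_cancel₀ hzm1
      linear_combination h1
    rw [hc_def, map_div₀, eq_div_iff hNF]
    linear_combination h2
  have hc1 : c ≠ 1 := by
    intro h
    have hmn : (m : K) = (N : K) := by
      have := (div_eq_one_iff_eq hN0).mp (hc_def ▸ h)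
      exact this
    apply hw
    linear_combination -hNK - hmn
  -- z ^ m = ι d
  set d := -(a ^ 2) / (c - 1) with hd_def
  have hcm1 : ι (c - 1) ≠ 0 := by
    intro h
    apply hc1
    have h0 : c - 1 = 0 := hι (by rw [h, map_zero])
    linear_combination h0
  have hzm : z ^ m = ι d := by
    have h1 : z ^ m * ι c - z ^ m + ι (a ^ 2) = 0 := by
      rw [← hzw, ← pow_add, ← hNm]
      exact hz1'
    rw [hd_def, map_div₀, eq_div_iff hcm1, map_sub, map_one, map_neg]
    linear_combination h1
  have hd0 : d ≠ 0 := by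
    intro h
    rw [h, map_zero] at hzm
    exact hz0 (pow_eq_zero_iff (by omega) |>.mp hzm)
  -- Bezout: z ^ gcd(w, m) lies in the image of K
  have hbez : ((Nat.gcd w m : ℕ) : ℤ) = (w : ℤ) * Nat.gcdA w m + (m : ℤ) * Nat.gcdB w m :=
    Nat.gcd_eq_gcd_ab w m
  have hze : z ^ ((Nat.gcd w m : ℕ) : ℤ) = ι (c ^ Nat.gcdA w m * d ^ Nat.gcdB w m) := by
    rw [hbez, zpow_add₀ hz0, zpow_mul, zpow_mul, zpow_natCast, zpow_natCast, hzw, hzm,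
      map_mul, map_zpow₀, map_zpow₀]
  obtain ⟨k, hk⟩ := hgcd
  set y := (c ^ Nat.gcdA w m * d ^ Nat.gcdB w m) ^ k with hy_def
  have hzy : z ^ (2 * l) = ι y := by
    rw [hk, pow_mul, ← zpow_natCast z (Nat.gcd w m), hze, ← map_pow]
  have hy0 : y ≠ 0 := by
    intro h
    rw [h, map_zero] at hzy
    exact hz0 (pow_eq_zero_iff (by omega) |>.mp hzy)
  have hys : y ^ (q - 1) = 1 := by
    rw [← hq]; exact FiniteField.pow_card_sub_one_eq_one y hy0
  have hc2 : c ^ 2 = 1 := by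
    apply hι
    rw [map_pow, map_one, ← hzw, ← pow_mul]
    have hww : w * 2 = (2 * l) * (q - 1) := by rw [hw_def]; ring
    rw [hww, pow_mul, hzy, ← map_pow, hys, map_one]
  have hfac : (c - 1) * (c + 1) = 0 := by linear_combination hc2
  rcases mul_eq_zero.mp hfac with h | h
  · exact absurd (by linear_combination h) hc1
  · refine ⟨?_, hN0⟩
    have hcneg : c = -1 := by linear_combination h
    have := (div_eq_iff hN0).mp (hc_def ▸ hcneg)
    linear_combination this

/-- For `p` odd, `g ≥ max{(q−1)/2, 2}`, `gcd(2g+2,q−1) = 2` and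
`⌊(2g+2)/(q−1)⌋ ≥ 2`, for every nonzero `a` in the prime subfield there is `l ∈ {1,2}` with
`X^{2g+2} − X^{2g+2−l(q−1)} + a²` squarefree, whose value at every `x ∈ F_q` is `a²`. -/
theorem stmt_6 (p : ℕ) (hp : p.Prime) (hodd : Odd p)
    (K : Type*) [Field K] [Fintype K] [CharP K p]
    (q : ℕ) (hq : Fintype.card K = q)
    (g : ℕ) (hg : g ≥ max ((q - 1) / 2) 2)
    (hgcd : Nat.gcd (2 * g + 2) (q - 1) = 2)
    (hL : 2 ≤ (2 * g + 2) / (q - 1)) :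
    ∀ a : K, a ≠ 0 → (∃ a₀ : ZMod p, a = ZMod.castHom (dvd_refl p) K a₀) →
      ∃ l : ℕ, (l = 1 ∨ l = 2) ∧
        Squarefree ((X : Polynomial K) ^ (2 * g + 2)
            - X ^ (2 * g + 2 - l * (q - 1)) + C (a ^ 2)) ∧
        ∀ x : K, ((X : Polynomial K) ^ (2 * g + 2)
            - X ^ (2 * g + 2 - l * (q - 1)) + C (a ^ 2)).eval x = a ^ 2 := by
  intro a ha _
  have hp2 : p ≠ 2 := by rintro rfl; simp [Nat.odd_iff] at hodd
  have hp3 : 3 ≤ p := by have := hp.two_le; omega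
  have hq2 : 2 ≤ q := by rw [← hq]; exact Fintype.one_lt_card
  have hqK : ((q : ℕ) : K) = 0 := by rw [← hq]; exact FiniteField.cast_card_eq_zero K
  have hsK : (((q - 1 : ℕ)) : K) = -1 := by
    rw [Nat.cast_sub (by omega), hqK]; ring
  have h2K : (2 : K) ≠ 0 := by
    intro h
    have h2 : ((2 : ℕ) : K) = 0 := by exact_mod_cast h
    have hdvd := (CharP.cast_eq_zero_iff K p 2).mp h2
    have := Nat.le_of_dvd (by norm_num) hdvd
    omega
  have h2s : 2 * (q - 1) ≤ 2 * g + 2 := by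
    have := (Nat.le_div_iff_mul_le (by omega : 0 < q - 1)).mp hL; omega
  have hgg : 2 ≤ g := le_trans (le_max_right _ _) hg
  have hne : 2 * g + 2 ≠ 2 * (q - 1) := by
    intro h
    have hdvd : Nat.gcd (2 * g + 2) (q - 1) = q - 1 := by
      rw [h]; exact Nat.gcd_eq_right (dvd_mul_left _ 2)
    rw [hgcd] at hdvd
    omega
  have hm1 : 1 ≤ 2 * g + 2 - 1 * (q - 1) := by omega
  have hm2 : 1 ≤ 2 * g + 2 - 2 * (q - 1) := by omega
  have hNm1 : 2 * g + 2 = (2 * g + 2 - 1 * (q - 1)) + 1 * (q - 1) := by omega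
  have hNm2 : 2 * g + 2 = (2 * g + 2 - 2 * (q - 1)) + 2 * (q - 1) := by omega
  have hw1 : ((1 * (q - 1) : ℕ) : K) ≠ 0 := by rw [one_mul, hsK]; simp
  have hw2 : ((2 * (q - 1) : ℕ) : K) ≠ 0 := by
    rw [Nat.cast_mul, hsK]
    simpa using h2K
  have hg1 : Nat.gcd (1 * (q - 1)) (2 * g + 2 - 1 * (q - 1)) ∣ 2 * 1 := by
    rw [one_mul]
    have h1 : Nat.gcd (q - 1) (2 * g + 2 - (q - 1)) = Nat.gcd (q - 1) (2 * g + 2) := by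
      conv_rhs => rw [show 2 * g + 2 = (2 * g + 2 - (q - 1)) + (q - 1) by omega]
      exact (Nat.gcd_add_self_right _ _).symm
    rw [h1, Nat.gcd_comm, hgcd]
  have hg2 : Nat.gcd (2 * (q - 1)) (2 * g + 2 - 2 * (q - 1)) ∣ 2 * 2 := by
    have h1 : Nat.gcd (2 * (q - 1)) (2 * g + 2 - 2 * (q - 1)) ∣ 2 * g + 2 := by
      have h2 := Nat.dvd_add (Nat.gcd_dvd_right (2 * (q - 1)) (2 * g + 2 - 2 * (q - 1)))
        (Nat.gcd_dvd_left (2 * (q - 1)) (2 * g + 2 - 2 * (q - 1)))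
      rwa [show (2 * g + 2 - 2 * (q - 1)) + 2 * (q - 1) = 2 * g + 2 from by omega] at h2
    have hd1 : Nat.gcd (2 * (q - 1)) (2 * g + 2 - 2 * (q - 1))
        ∣ Nat.gcd (2 * (2 * g + 2)) (2 * (q - 1)) :=
      Nat.dvd_gcd (h1.trans (dvd_mul_left _ 2)) (Nat.gcd_dvd_left _ _)
    rwa [Nat.gcd_mul_left 2, hgcd] at hd1
  by_cases hsf : Squarefree ((X : Polynomial K) ^ (2 * g + 2)
      - X ^ (2 * g + 2 - 1 * (q - 1)) + C (a ^ 2))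
  · exact ⟨1, Or.inl rfl, hsf, aux_eval q hq a _ _ 1 hm1 hNm1⟩
  · refine ⟨2, Or.inr rfl, ?_, aux_eval q hq a _ _ 2 hm2 hNm2⟩
    by_contra hsf2
    have k1 := aux_key q hq a ha (2 * g + 2) (2 * g + 2 - 1 * (q - 1)) 1 hm1 hNm1 hw1 hg1
      (fun h => hsf h.squarefree)
    have k2 := aux_key q hq a ha (2 * g + 2) (2 * g + 2 - 2 * (q - 1)) 2 hm2 hNm2 hw2 hg2
      (fun h => hsf2 h.squarefree)
    have e1 := k1.1
    have e2 := k2.1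
    rw [Nat.cast_sub (by omega), Nat.cast_mul, hsK] at e1
    rw [Nat.cast_sub (by omega), Nat.cast_mul, hsK] at e2
    push_cast at e1 e2
    have hone : (1 : K) = 0 := by linear_combination e2 - e1
    exact one_ne_zero hone
end

section
/- Let p be an odd prime and q = p^m with m odd (so q is not a square). Let g be an integer with (q−1)/2 ≤ g < q−2, gcd(2g+2, q−1) = 2, and 2(2g+2) ≡ −1 (mod p), and set n = 2g+3−q (so that q−1+n = 2g+2 and n is even). Then there exist nonzero elements b, ξ of the prime subfield F_p ⊆ F_q with ξ a non-square in F_p such that the polynomial F(X) = X^{2g+2} + b²·X^{2n} − (2b²ξ + 1)·X^n + b²ξ² ∈ F_q[X] is squarefree and F(x) is a nonzero square in F_q for every x ∈ F_q (so y² = F(x) is a smooth F_q-maximal hyperelliptic curve of genus g defined over F_p). -/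
/-!
For `x ≠ 0` in `𝔽_q` we have `x ^ (2g+2) = x ^ n`, so `F(x) = b² (xⁿ - ξ)²`, which is nonzero
because `xⁿ` is a square while `ξ` stays a non-square in the odd-degree extension `𝔽_q`;
and `F(0) = (bξ)²`.

For squarefreeness, let `z` be a common root of `F` and `F'`. Since `2g+2 ≡ -n (mod p)`, with
`t = zⁿ`, `s = t - ξ` and `u = z^(q-1)` one gets `u = 2b²s - 1`, `u ^ n = t ^ (q-1)` and
`3b²s² + 2(b²ξ - 1)s - 2ξ = 0`, a quadratic over `𝔽_p`. If `s ∈ 𝔽_p` then `u ∈ 𝔽_p` and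
`uⁿ = 1`, so `u = ±1` as `gcd(n, p-1) ∣ 2`, contradicting the quadratic. Otherwise `s ∈ 𝔽_{p²}`
and the same argument applies to the norm `u·uᵖ`, which Vieta's formulas identify as
`-(4b²ξ + 1)/3`; `ξ` is chosen so that this is not `±1`.
-/

open Polynomial

noncomputable def curvePoly {R : Type*} [CommRing R] (N n : ℕ) (c ξ : R) : R[X] :=
  X ^ N + C c * X ^ (2 * n) - C (2 * c * ξ + 1) * X ^ n + C (c * ξ ^ 2)

section CurvePoly

variable {R : Type*} [CommRing R] (N n : ℕ) (c ξ : R)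

theorem eval_curvePoly (x : R) :
    (curvePoly N n c ξ).eval x = x ^ N + c * x ^ (2 * n) - (2 * c * ξ + 1) * x ^ n + c * ξ ^ 2 := by
  simp [curvePoly]

theorem map_curvePoly {S : Type*} [CommRing S] (f : R →+* S) :
    (curvePoly N n c ξ).map f = curvePoly N n (f c) (f ξ) := by
  simp [curvePoly, map_ofNat f]

theorem mul_eval_derivative_curvePoly (x : R) :
    x * (derivative (curvePoly N n c ξ)).eval x =
      N * x ^ N + 2 * n * c * x ^ (2 * n) - n * (2 * c * ξ + 1) * x ^ n := by
  have hx (k : ℕ) : x * ((k : R) * x ^ (k - 1)) = k * x ^ k := by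
    rcases k with _ | k
    · simp
    · rw [Nat.add_sub_cancel, pow_succ]; ring
  simp only [curvePoly, derivative_add, derivative_sub, derivative_mul, derivative_C,
    derivative_X_pow, eval_add, eval_sub, eval_mul, eval_C, eval_X, eval_pow, zero_mul,
    zero_add, add_zero]
  have hx2n := hx (2 * n)
  push_cast at hx2n ⊢
  linear_combination hx N + c * hx2n - (2 * c * ξ + 1) * hx n

end CurvePoly

theorem pow_pow_eq_self {M : Type*} [Monoid M] {x : M} {k : ℕ} (h : x ^ k = x) (j : ℕ) :
    x ^ k ^ j = x :=
  (congr_fun (pow_iterate k j) x).symm.trans (Function.iterate_fixed h j)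

theorem pow_sub_one_eq_one_of_pow_eq_self {G₀ : Type*} [GroupWithZero G₀] {x : G₀} {k : ℕ}
    (hk : 0 < k) (hx : x ≠ 0) (h : x ^ k = x) : x ^ (k - 1) = 1 :=
  mul_right_cancel₀ hx (by rw [← pow_succ, Nat.sub_add_cancel hk, h, one_mul])

theorem sq_eq_one_of_pow_eq_pow_sub_one {G₀ : Type*} [GroupWithZero G₀] {p m n : ℕ}
    (hp : 0 < p) (hn : n ≠ 0) (hgcd : n.gcd (p - 1) ∣ 2) {v w : G₀} (hv : v ^ p = v)
    (hw : w ^ p = w) (hw0 : w ≠ 0) (hvw : v ^ n = w ^ (p ^ m - 1)) : v ^ 2 = 1 := by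
  have hvn : v ^ n = 1 := hvw.trans <|
    pow_sub_one_eq_one_of_pow_eq_self (pow_pos hp m) hw0 (pow_pow_eq_self hw m)
  have hv0 : v ≠ 0 := by
    rintro rfl
    simp [zero_pow hn] at hvn
  obtain ⟨e, he⟩ := hgcd
  rw [he, pow_mul, pow_gcd_eq_one.2 ⟨hvn, pow_sub_one_eq_one_of_pow_eq_self hp hv0 hv⟩, one_pow]

theorem vieta_of_ne {K : Type*} [Field K] {a b e s s' : K} (hs : a * s ^ 2 + b * s + e = 0)
    (hs' : a * s' ^ 2 + b * s' + e = 0) (hne : s ≠ s') :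
    a * (s + s') + b = 0 ∧ a * (s * s') = e := by
  have hsum : a * (s + s') + b = 0 := by
    have : (s - s') * (a * (s + s') + b) = 0 := by linear_combination hs - hs'
    exact (mul_eq_zero.1 this).resolve_left (sub_ne_zero.2 hne)
  exact ⟨hsum, by linear_combination s * hsum - hs⟩

theorem quadratic_ne_zero_of_sq_eq_one {K : Type*} [Field K] {c ξ s : K} (h2 : (2 : K) ≠ 0)
    (hc0 : c ≠ 0) (hξ0 : ξ ≠ 0) (hu : (2 * c * s - 1) ^ 2 = 1) :
    3 * c * s ^ 2 + 2 * (c * ξ - 1) * s - 2 * ξ ≠ 0 := by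
  intro hs
  rcases sq_eq_one_iff.1 hu with h1 | h1
  · have hcs : c * s = 1 := mul_left_cancel₀ h2 (by linear_combination h1)
    exact one_ne_zero (by linear_combination c * hs - (3 * c * s + 1 + 2 * c * ξ) * hcs)
  · have hs0 : s = 0 :=
      (mul_eq_zero.1 (by linear_combination h1 : 2 * c * s = 0)).resolve_left (mul_ne_zero h2 hc0)
    subst hs0
    exact hξ0 ((mul_eq_zero.1 (by linear_combination -hs : 2 * ξ = 0)).resolve_left h2)

theorem mul_eq_neg_one_or_of_norm_sq_eq_one {K : Type*} [Field K] {c ξ s s' : K}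
    (h2 : (2 : K) ≠ 0) (hsum : 3 * c * (s + s') + 2 * (c * ξ - 1) = 0)
    (hprod : 3 * c * (s * s') = -2 * ξ) (hN : ((2 * c * s - 1) * (2 * c * s' - 1)) ^ 2 = 1) :
    c * ξ = -1 ∨ 2 * (c * ξ) = 1 := by
  have h3N : 3 * ((2 * c * s - 1) * (2 * c * s' - 1)) = -4 * c * ξ - 1 := by
    linear_combination 4 * c * hprod - 2 * hsum
  rcases sq_eq_one_iff.1 hN with h1 | h1
  · exact .inl (mul_left_cancel₀ (mul_ne_zero h2 h2) (by linear_combination h3N - 3 * h1))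
  · exact .inr (mul_left_cancel₀ h2 (by linear_combination h3N - 3 * h1))

section CharP

variable {L : Type*} [Field L] {p : ℕ} [Fact p.Prime] [CharP L p]

theorem two_mul_sub_one_pow_ne_pow_sub_one (hp2 : p ≠ 2) {m n : ℕ} (hn : n ≠ 0)
    (hgcd : n.gcd (p - 1) ∣ 2) {c ξ s : L} (hc : c ^ p = c) (hξ : ξ ^ p = ξ) (hc0 : c ≠ 0)
    (hξ0 : ξ ≠ 0) (hcξ : p ≠ 3 → c * ξ ≠ -1 ∧ 2 * (c * ξ) ≠ 1)
    (hs : 3 * c * s ^ 2 + 2 * (c * ξ - 1) * s - 2 * ξ = 0) (hsξ : s + ξ ≠ 0) :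
    (2 * c * s - 1) ^ n ≠ (s + ξ) ^ (p ^ m - 1) := by
  intro hpow
  have hp := (Fact.out : p.Prime).pos
  have h2 : (2 : L) ≠ 0 := Ring.two_ne_zero (by rwa [ringChar.eq L p])
  have hu (x : L) : (2 * c * x - 1) ^ p = 2 * c * x ^ p - 1 := by
    rw [← frobenius_def, map_sub, map_mul, map_mul, map_ofNat, map_one, frobenius_def,
      frobenius_def, hc]
  have ht (x : L) : (x + ξ) ^ p = x ^ p + ξ := by rw [add_pow_char, hξ]
  by_cases hsp : s ^ p = s
  · exact quadratic_ne_zero_of_sq_eq_one h2 hc0 hξ0 (sq_eq_one_of_pow_eq_pow_sub_one hp hn hgcd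
      (by rw [hu, hsp]) (by rw [ht, hsp]) hsξ hpow) hs
  have hs' : 3 * c * (s ^ p) ^ 2 + 2 * (c * ξ - 1) * s ^ p - 2 * ξ = 0 := by
    have h := congrArg (frobenius L p) hs
    simp only [map_add, map_sub, map_mul, map_pow, map_ofNat, map_one, map_zero] at h
    simpa only [frobenius_def, hc, hξ] using h
  obtain ⟨hsum, hprod⟩ := vieta_of_ne (a := 3 * c) (b := 2 * (c * ξ - 1)) (e := -2 * ξ)
    (by linear_combination hs) (by linear_combination hs') (Ne.symm hsp)
  by_cases h3 : (3 : L) = 0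
  · exact hξ0 ((mul_eq_zero.1 (by linear_combination hprod - c * s * s ^ p * h3 :
      2 * ξ = 0)).resolve_left h2)
  obtain ⟨hc1, hc2⟩ := hcξ (by rintro rfl; exact h3 (by exact_mod_cast CharP.cast_eq_zero L 3))
  have hspp : (s ^ p) ^ p = s := by
    have h := congrArg (frobenius L p) hsum
    simp only [map_add, map_sub, map_mul, map_ofNat, map_one, map_zero] at h
    simp only [frobenius_def, hc, hξ] at h
    exact mul_left_cancel₀ (mul_ne_zero h3 hc0) (by linear_combination h - hsum)
  have hN := sq_eq_one_of_pow_eq_pow_sub_one hp hn hgcd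
    (v := (2 * c * s - 1) * (2 * c * s ^ p - 1)) (w := (s + ξ) * (s ^ p + ξ))
    (by rw [mul_pow, hu, hu, hspp, mul_comm])
    (by rw [mul_pow, ht, ht, hspp, mul_comm])
    (mul_ne_zero hsξ (by rw [← ht]; exact pow_ne_zero _ hsξ))
    (by rw [mul_pow, mul_pow, ← hu, ← ht, pow_right_comm _ p n, hpow, pow_right_comm])
  exact (mul_eq_neg_one_or_of_norm_sq_eq_one h2 hsum hprod hN).elim hc1 hc2

theorem not_isRoot_curvePoly_and_derivative (hp2 : p ≠ 2) {N n m : ℕ}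
    (hN : N = n + (p ^ m - 1)) (hNn : p ∣ N + n) (hn : ¬p ∣ n) (hgcd : n.gcd (p - 1) ∣ 2)
    {c ξ : L} (hc : c ^ p = c) (hξ : ξ ^ p = ξ) (hc0 : c ≠ 0) (hξ0 : ξ ≠ 0)
    (hcξ : p ≠ 3 → c * ξ ≠ -1 ∧ 2 * (c * ξ) ≠ 1) (z : L) :
    ¬((curvePoly N n c ξ).IsRoot z ∧ (derivative (curvePoly N n c ξ)).IsRoot z) := by
  rintro ⟨hFz, hF'z⟩
  have hn0 : n ≠ 0 := by rintro rfl; exact hn (dvd_zero p)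
  have hnL : (n : L) ≠ 0 := mt (CharP.cast_eq_zero_iff L p n).1 hn
  have hNL : (N : L) = -n :=
    eq_neg_of_add_eq_zero_left (by exact_mod_cast (CharP.cast_eq_zero_iff L p _).2 hNn)
  have hz : z ≠ 0 := by
    rintro rfl
    simp only [IsRoot.def, eval_curvePoly, zero_pow (by omega : N ≠ 0), zero_pow hn0,
      zero_pow (by omega : 2 * n ≠ 0)] at hFz
    exact mul_ne_zero hc0 (pow_ne_zero 2 hξ0) (by linear_combination hFz)
  set t := z ^ n
  have hz2n : z ^ (2 * n) = t ^ 2 := by rw [mul_comm, pow_mul]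
  have hF : z ^ N + c * t ^ 2 - (2 * c * ξ + 1) * t + c * ξ ^ 2 = 0 := by
    rw [← hz2n, ← eval_curvePoly]; exact hFz
  -- `z F'(z) = n (-z^N + 2 c t² - (2cξ + 1) t)` because `N ≡ -n (mod p)`
  have hzN : z ^ N = 2 * c * t ^ 2 - (2 * c * ξ + 1) * t := by
    have h := mul_eval_derivative_curvePoly N n c ξ z
    rw [hF'z.eq_zero, mul_zero, hNL, hz2n] at h
    exact (mul_left_cancel₀ hnL (by linear_combination -h)).symm
  have hu : z ^ (p ^ m - 1) = 2 * c * (t - ξ) - 1 := by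
    refine mul_right_cancel₀ (pow_ne_zero n hz) ?_
    rw [← pow_add, add_comm, ← hN]
    linear_combination hzN
  refine two_mul_sub_one_pow_ne_pow_sub_one (m := m) hp2 hn0 hgcd hc hξ hc0 hξ0 hcξ
    (s := t - ξ) (by linear_combination hF - hzN) (by rw [sub_add_cancel]; exact pow_ne_zero n hz) ?_
  rw [sub_add_cancel, ← hu, ← pow_mul, ← pow_mul, mul_comm]

end CharP

theorem squarefree_curvePoly {K : Type*} [Field K] {p : ℕ} [Fact p.Prime] [CharP K p]
    (hp2 : p ≠ 2) {N n m : ℕ} (hN : N = n + (p ^ m - 1)) (hNn : p ∣ N + n) (hn : ¬p ∣ n)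
    (hgcd : n.gcd (p - 1) ∣ 2) {c ξ : K} (hc : c ^ p = c) (hξ : ξ ^ p = ξ) (hc0 : c ≠ 0)
    (hξ0 : ξ ≠ 0) (hcξ : p ≠ 3 → c * ξ ≠ -1 ∧ 2 * (c * ξ) ≠ 1) :
    Squarefree (curvePoly N n c ξ) := by
  set ι := algebraMap K (AlgebraicClosure K)
  refine Separable.squarefree <|
    (isCoprime_iff_aeval_ne_zero_of_isAlgClosed K (AlgebraicClosure K) _ _).2 fun z => ?_
  rw [← eval_map_algebraMap, ← eval_map_algebraMap, ← derivative_map, map_curvePoly]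
  refine not_and_or.1 <| not_isRoot_curvePoly_and_derivative hp2 hN hNn hn hgcd
    (by rw [← map_pow, hc]) (by rw [← map_pow, hξ]) ((map_ne_zero ι).2 hc0)
    ((map_ne_zero ι).2 hξ0) (fun hp3 => ?_) z
  obtain ⟨h1, h2⟩ := hcξ hp3
  exact ⟨by simpa using ι.injective.ne h1, by simpa [map_ofNat ι 2] using ι.injective.ne h2⟩

theorem eval_curvePoly_of_ne_zero {K : Type*} [Field K] [Fintype K] {N n : ℕ}
    (hN : N = n + (Fintype.card K - 1)) (c ξ : K) {x : K} (hx : x ≠ 0) :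
    (curvePoly N n c ξ).eval x = c * (x ^ n - ξ) ^ 2 := by
  rw [eval_curvePoly, hN, pow_add, FiniteField.pow_card_sub_one_eq_one x hx, mul_one,
    mul_comm 2 n, pow_mul]
  ring

theorem exists_ne_zero_eval_curvePoly_eq_sq {K : Type*} [Field K] [Fintype K] {N n : ℕ}
    (hN : N = n + (Fintype.card K - 1)) (hn : n ≠ 0) (hn2 : Even n) {b ξ : K} (hb : b ≠ 0)
    (hξ : ¬IsSquare ξ) (x : K) : ∃ y : K, y ≠ 0 ∧ (curvePoly N n (b ^ 2) ξ).eval x = y ^ 2 := by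
  have hξ0 : ξ ≠ 0 := by rintro rfl; exact hξ IsSquare.zero
  rcases eq_or_ne x 0 with rfl | hx
  · refine ⟨b * ξ, mul_ne_zero hb hξ0, ?_⟩
    rw [eval_curvePoly, zero_pow (by omega), zero_pow (by omega), zero_pow hn]
    ring
  · refine ⟨b * (x ^ n - ξ), mul_ne_zero hb (sub_ne_zero.2 ?_), ?_⟩
    · rintro rfl
      exact hξ (hn2.isSquare_pow x)
    · rw [eval_curvePoly_of_ne_zero hN _ _ hx]
      ring

theorem ZMod.exists_not_isSquare_ne_neg_one_ne_inv_two {p : ℕ} [Fact p.Prime] (hp2 : p ≠ 2) :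
    ∃ ξ : ZMod p, ¬IsSquare ξ ∧ (p ≠ 3 → ξ ≠ -1 ∧ 2 * ξ ≠ 1) := by
  obtain ⟨η, hη⟩ := FiniteField.exists_nonsquare (F := ZMod p) (by rwa [ZMod.ringChar_zmod_n])
  by_cases hp3 : p = 3
  · exact ⟨η, hη, absurd hp3⟩
  have h3 : (3 : ZMod p) ≠ 0 := fun h => hp3 <|
    (Nat.prime_dvd_prime_iff_eq Fact.out Nat.prime_three).1
      ((ZMod.natCast_eq_zero_iff 3 p).1 (by exact_mod_cast h))
  have h2 : (2 : ZMod p) ≠ 0 := Ring.two_ne_zero (by rwa [ZMod.ringChar_zmod_n])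
  have h4η : ¬IsSquare (4 * η) := fun ⟨r, hr⟩ => hη ⟨r / 2, by
    field_simp
    linear_combination hr⟩
  by_contra! h
  have bad (ξ : ZMod p) (hξ : ¬IsSquare ξ) : ξ = -1 ∨ 2 * ξ = 1 :=
    or_iff_not_imp_left.2 ((h ξ hξ).2)
  -- `η` and `4η` are distinct non-squares, but `-1` and `1/2` cannot both be among them
  apply h3
  rcases bad η hη with h1 | h1 <;> rcases bad _ h4η with h2 | h2
  · linear_combination 4 * h1 - h2
  · linear_combination (exp := 2) 8 * h1 - h2
  · linear_combination h2 - 2 * h1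
  · linear_combination h2 - 4 * h1

theorem not_isSquare_castHom_of_odd {p m : ℕ} [Fact p.Prime] (hp2 : p ≠ 2) (hm : Odd m)
    {K : Type*} [Field K] [Fintype K] [CharP K p] (hcard : Fintype.card K = p ^ m)
    {ξ : ZMod p} (hξ : ¬IsSquare ξ) : ¬IsSquare (ZMod.castHom (dvd_refl p) K ξ) := by
  set ψ := ZMod.castHom (dvd_refl p) K
  have hp : Odd p := (Fact.out : p.Prime).odd_of_ne_two hp2
  rintro ⟨y, hy⟩
  have hξ0 : ξ ≠ 0 := by rintro rfl; exact hξ IsSquare.zero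
  have hy0 : y ≠ 0 := by rintro rfl; exact hξ0 (ψ.injective (by simpa using hy))
  have hyp : (y ^ p) ^ 2 = y ^ 2 := by
    rw [← pow_mul, mul_comm, pow_mul, sq, ← hy, ← map_pow, ZMod.pow_card]
  -- `y ^ p = -y` is impossible: it would give `y ^ (p ^ m) = -y` for odd `m`
  have hfix : y ^ p = y := by
    refine (sq_eq_sq_iff_eq_or_eq_neg.1 hyp).resolve_right fun hneg => hy0 ?_
    have hpp : y ^ p ^ 2 = y := by rw [sq, pow_mul, hneg, hp.neg_pow, hneg, neg_neg]
    obtain ⟨j, rfl⟩ := hm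
    have h := FiniteField.pow_card y
    rw [hcard, pow_succ, pow_mul, pow_mul, pow_pow_eq_self hpp j, hneg, neg_eq_iff_add_eq_zero,
      ← two_mul] at h
    exact (mul_eq_zero.1 h).resolve_left (Ring.two_ne_zero (by rwa [ringChar.eq K p]))
  refine hξ ((ZMod.euler_criterion p hξ0).2 (ψ.injective ?_))
  rw [map_pow, hy, map_one, ← sq, ← pow_mul, Nat.two_mul_odd_div_two (Nat.odd_iff.1 hp)]
  exact pow_sub_one_eq_one_of_pow_eq_self (Fact.out : p.Prime).pos hy0 hfix

theorem stmt_14_general (p : ℕ) (hp : p.Prime) (hodd : Odd p) (m : ℕ) (hm : Odd m)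
    (K : Type*) [Field K] [Fintype K] [CharP K p]
    (q : ℕ) (hq : q = p ^ m) (hcard : Fintype.card K = q)
    (g : ℕ) (hg1 : (q - 1) / 2 ≤ g)
    (hgcd : Nat.gcd (2 * g + 2) (q - 1) = 2)
    (hmodp : ((2 * (2 * g + 2) : ℕ) : ZMod p) = -1) :
    ∃ b ξ : K, b ≠ 0 ∧ ξ ≠ 0 ∧
      (∃ b₀ : ZMod p, b = ZMod.castHom (dvd_refl p) K b₀) ∧
      (∃ ξ₀ : ZMod p, ξ = ZMod.castHom (dvd_refl p) K ξ₀ ∧ ¬ ∃ y : ZMod p, ξ₀ = y ^ 2) ∧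
      Squarefree ((X : Polynomial K) ^ (2 * g + 2)
          + C (b ^ 2) * X ^ (2 * (2 * g + 3 - q))
          - C (2 * b ^ 2 * ξ + 1) * X ^ (2 * g + 3 - q) + C (b ^ 2 * ξ ^ 2)) ∧
      ∀ x : K, ∃ y : K, y ≠ 0 ∧
        ((X : Polynomial K) ^ (2 * g + 2)
            + C (b ^ 2) * X ^ (2 * (2 * g + 3 - q))
            - C (2 * b ^ 2 * ξ + 1) * X ^ (2 * g + 3 - q) + C (b ^ 2 * ξ ^ 2)).eval x
          = y ^ 2 := by
  have := Fact.mk hp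
  have hp2 : p ≠ 2 := by rintro rfl; exact Nat.not_even_iff_odd.2 hodd even_two
  subst hq
  set n := 2 * g + 3 - p ^ m
  have hN : 2 * g + 2 = n + (p ^ m - 1) := by have := pow_pos hp.pos m; omega
  have hgcdn : n.gcd (p ^ m - 1) = 2 := by rw [← hgcd, hN, Nat.gcd_add_self_left]
  have hdvd : p ∣ 2 * (2 * g + 2) + 1 :=
    (ZMod.natCast_eq_zero_iff _ p).1 (by rw [Nat.cast_succ, hmodp, neg_add_cancel])
  have hNn : p ∣ 2 * g + 2 + n := (Nat.dvd_add_left (dvd_pow_self p hm.pos.ne')).1 <| by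
    rwa [show 2 * g + 2 + n + p ^ m = 2 * (2 * g + 2) + 1 by omega]
  have hn : ¬p ∣ n := fun h => hp.one_lt.ne' <| Nat.dvd_one.1 <|
    (Nat.dvd_add_right (((Nat.dvd_add_left h).1 hNn).mul_left 2)).1 hdvd
  obtain ⟨ξ₀, hξ₀, hcξ₀⟩ := ZMod.exists_not_isSquare_ne_neg_one_ne_inv_two hp2
  set ψ := ZMod.castHom (dvd_refl p) K
  have hξ := not_isSquare_castHom_of_odd hp2 hm hcard hξ₀
  refine ⟨1, ψ ξ₀, one_ne_zero, fun h => hξ (h ▸ IsSquare.zero), ⟨1, ψ.map_one.symm⟩,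
    ⟨ξ₀, rfl, mt (isSquare_iff_exists_sq ξ₀).2 hξ₀⟩, ?_,
    exists_ne_zero_eval_curvePoly_eq_sq (hcard ▸ hN) (by rintro h; exact hn (h ▸ dvd_zero p))
      (even_iff_two_dvd.2 (hgcdn ▸ Nat.gcd_dvd_left n _)) one_ne_zero hξ⟩
  exact squarefree_curvePoly hp2 hN hNn hn
    (hgcdn ▸ Nat.gcd_dvd_gcd_of_dvd_right n (Nat.sub_one_dvd_pow_sub_one p m)) (by simp)
    (by rw [← map_pow, ZMod.pow_card]) (by simp) (fun h => hξ (h ▸ IsSquare.zero))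
    (fun hp3 => by simpa [map_ofNat ψ 2] using (hcξ₀ hp3).imp ψ.injective.ne ψ.injective.ne)

/-- The remaining case in odd characteristic: `q = p^m` not a square,
`(q−1)/2 ≤ g < q−2`, `gcd(2g+2,q−1) = 2`, `2(2g+2) ≡ −1 (mod p)`, `n = 2g+3−q`.  There are
nonzero `b, ξ` in the prime subfield, `ξ` a non-square in `F_p`, such that
`X^{2g+2} + b²X^{2n} − (2b²ξ+1)Xⁿ + b²ξ²` is squarefree and all its values on `F_q` are
nonzero squares. -/
theorem stmt_14 (p : ℕ) (hp : p.Prime) (hodd : Odd p) (m : ℕ) (hm : Odd m)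
    (K : Type*) [Field K] [Fintype K] [CharP K p]
    (q : ℕ) (hq : q = p ^ m) (hcard : Fintype.card K = q)
    (g : ℕ) (hg1 : (q - 1) / 2 ≤ g) (hg2 : g < q - 2)
    (hgcd : Nat.gcd (2 * g + 2) (q - 1) = 2)
    (hmodp : ((2 * (2 * g + 2) : ℕ) : ZMod p) = -1) :
    ∃ b ξ : K, b ≠ 0 ∧ ξ ≠ 0 ∧
      (∃ b₀ : ZMod p, b = ZMod.castHom (dvd_refl p) K b₀) ∧
      (∃ ξ₀ : ZMod p, ξ = ZMod.castHom (dvd_refl p) K ξ₀ ∧ ¬ ∃ y : ZMod p, ξ₀ = y ^ 2) ∧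
      Squarefree ((X : Polynomial K) ^ (2 * g + 2)
          + C (b ^ 2) * X ^ (2 * (2 * g + 3 - q))
          - C (2 * b ^ 2 * ξ + 1) * X ^ (2 * g + 3 - q) + C (b ^ 2 * ξ ^ 2)) ∧
      ∀ x : K, ∃ y : K, y ≠ 0 ∧
        ((X : Polynomial K) ^ (2 * g + 2)
            + C (b ^ 2) * X ^ (2 * (2 * g + 3 - q))
            - C (2 * b ^ 2 * ξ + 1) * X ^ (2 * g + 3 - q) + C (b ^ 2 * ξ ^ 2)).eval x
          = y ^ 2 :=
  stmt_14_general p hp hodd m hm K q hq hcard g hg1 hgcd hmodp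
end
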